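/- Let h > 0 and for k ∈ ℤ set x_k = k·h and S_k(x, h) = sin((π/h)(x − x_k)) / ((π/h)(x − x_k)) for x ≠ x_k, S_k(x_k, h) = 1. Then the second derivative of S_k(·, h) at the node x_j equals −π²/(3h²) when j = k and equals −2·(−1)^{j−k} / (h²·(j − k)²) when j ≠ k. Consequently the second sinc differentiation matrix, with (j, k) entry S_k''(x_j), is symmetric: S_k''(x_j) = S_j''(x_k) for all j, k. -/

import Mathlib

/-!
Every `S k` is `sinc` composed with the affine map `x ↦ (π/h)(x - k h)`, which sends the node `x_j`
to `(j - k)π`, so `S_k''(x_j) = (π/h)² sinc''((j - k)π)`. Since `sinc` is analytic (it is the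
`dslope` of `sin` at `0`), the identity `x · sinc x = sin x` may be differentiated freely; doing so
`n` times gives `n sinc⁽ⁿ⁻¹⁾ x + x sinc⁽ⁿ⁾ x = sin⁽ⁿ⁾ x`. At `x = 0` the case `n = 3` yields
`sinc'' 0 = -1/3`; at `x = nπ ≠ 0`, where `sinc` vanishes, the cases `n = 1, 2` yield
`sinc'(nπ) = (-1)ⁿ/(nπ)` and then `sinc''(nπ) = -2(-1)ⁿ/(nπ)²`. Symmetry holds because `sinc`, and
hence `sinc''`, is even.
-/

open Real

section Calculus

variable {𝕜 : Type*} [NontriviallyNormedField 𝕜]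

theorem AnalyticOnNhd.dslope [CompleteSpace 𝕜] {E : Type*} [NormedAddCommGroup E]
    [NormedSpace 𝕜 E] {f : 𝕜 → E} {s : Set 𝕜} {a : 𝕜} (hf : AnalyticOnNhd 𝕜 f s) :
    AnalyticOnNhd 𝕜 (dslope f a) s := by
  intro b hb
  obtain rfl | hba := eq_or_ne b a
  · obtain ⟨p, hp⟩ := hf b hb
    exact hp.has_fpower_series_dslope_fslope.analyticAt
  · have hslope : AnalyticAt 𝕜 (fun x => (x - a)⁻¹ • (f x - f a)) b :=
      ((analyticAt_id.sub analyticAt_const).inv (sub_ne_zero.2 hba)).smul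
        ((hf b hb).sub analyticAt_const)
    refine hslope.congr ?_
    filter_upwards [isOpen_ne.mem_nhds hba] with x hx
    rw [dslope_of_ne f hx, slope_def_module]

theorem Function.Even.deriv {F : Type*} [NormedAddCommGroup F] [NormedSpace 𝕜 F] {f : 𝕜 → F}
    (hf : f.Even) : (_root_.deriv f).Odd := by
  intro x
  have h := deriv_comp_neg (f := f) (x := x)
  rw [show (fun y => f (-y)) = f from funext hf] at h
  rw [h, neg_neg]

theorem Function.Odd.deriv {F : Type*} [NormedAddCommGroup F] [NormedSpace 𝕜 F] {f : 𝕜 → F}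
    (hf : f.Odd) : (_root_.deriv f).Even := by
  intro x
  have h := deriv_comp_neg (f := f) (x := x)
  rw [show (fun y => f (-y)) = -f from funext hf, deriv.neg, neg_inj] at h
  exact h.symm

theorem deriv_comp_mul_sub (f : 𝕜 → 𝕜) (c a : 𝕜) :
    deriv (fun x => f (c * (x - a))) = fun x => c * deriv f (c * (x - a)) := by
  funext x
  exact (deriv_comp_sub_const (f := fun y => f (c * y)) a x).trans (deriv_comp_mul_left ..)

theorem deriv_deriv_comp_mul_sub (f : 𝕜 → 𝕜) (c a x : 𝕜) :
    deriv (deriv fun x => f (c * (x - a))) x = c ^ 2 * deriv (deriv f) (c * (x - a)) := by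
  rw [deriv_comp_mul_sub, deriv_const_mul_field, deriv_comp_mul_sub, ← mul_assoc, sq]

theorem deriv_const_mul_add_id_mul_deriv {f : 𝕜 → 𝕜} (hf : Differentiable 𝕜 f)
    (hf' : Differentiable 𝕜 (deriv f)) (c x : 𝕜) :
    deriv (fun y => c * f y + y * deriv f y) x = (c + 1) * deriv f x + x * deriv (deriv f) x := by
  have h := ((hf x).hasDerivAt.const_mul c).fun_add ((hasDerivAt_id' x).fun_mul (hf' x).hasDerivAt)
  rw [h.deriv]
  ring

end Calculus

namespace Real

theorem even_sinc : sinc.Even := sinc_neg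

theorem analyticOnNhd_sinc : AnalyticOnNhd ℝ sinc Set.univ := by
  rw [sinc_eq_dslope]
  exact analyticOnNhd_sin.dslope

theorem contDiff_sinc {n : WithTop ℕ∞} : ContDiff ℝ n sinc :=
  analyticOnNhd_sinc.contDiff

theorem differentiable_sinc : Differentiable ℝ sinc :=
  contDiff_sinc.differentiable one_ne_zero

theorem differentiable_deriv_sinc : Differentiable ℝ (deriv sinc) :=
  (contDiff_sinc.iterate_deriv 1).differentiable (by simp)

theorem differentiable_deriv_deriv_sinc : Differentiable ℝ (deriv (deriv sinc)) :=
  (contDiff_sinc.iterate_deriv 2).differentiable (by simp)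

theorem mul_sinc (x : ℝ) : x * sinc x = sin x := by
  simpa [sinc_eq_dslope] using sub_smul_dslope sin 0 x

theorem sinc_add_mul_deriv_sinc (x : ℝ) : sinc x + x * deriv sinc x = cos x := by
  have h := (hasDerivAt_id' x).fun_mul (differentiable_sinc x).hasDerivAt
  rw [show (fun y => y * sinc y) = sin from funext mul_sinc] at h
  simpa using h.deriv.symm

theorem two_mul_deriv_sinc_add_mul_deriv_deriv_sinc (x : ℝ) :
    2 * deriv sinc x + x * deriv (deriv sinc) x = -sin x := by
  have h := deriv_const_mul_add_id_mul_deriv differentiable_sinc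
    differentiable_deriv_sinc 1 x
  simp only [one_mul, sinc_add_mul_deriv_sinc, Real.deriv_cos] at h
  linear_combination -h

theorem three_mul_deriv_deriv_sinc_add_mul_deriv_deriv_deriv_sinc (x : ℝ) :
    3 * deriv (deriv sinc) x + x * deriv (deriv (deriv sinc)) x = -cos x := by
  have h := deriv_const_mul_add_id_mul_deriv differentiable_deriv_sinc
    differentiable_deriv_deriv_sinc 2 x
  simp only [two_mul_deriv_sinc_add_mul_deriv_deriv_sinc, deriv.fun_neg, Real.deriv_sin] at h
  linear_combination -h

theorem deriv_deriv_sinc_zero : deriv (deriv sinc) 0 = -1 / 3 := by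
  have h := three_mul_deriv_deriv_sinc_add_mul_deriv_deriv_deriv_sinc 0
  rw [zero_mul, add_zero, cos_zero] at h
  linear_combination h / 3

theorem deriv_deriv_sinc_int_mul_pi {n : ℤ} (hn : n ≠ 0) :
    deriv (deriv sinc) (n * π) = -2 * (-1) ^ n / (n * π) ^ 2 := by
  have hx : (n : ℝ) * π ≠ 0 := mul_ne_zero (Int.cast_ne_zero.2 hn) pi_ne_zero
  have h0 : sinc (n * π) = 0 := by rw [sinc_of_ne_zero hx, sin_int_mul_pi, zero_div]
  have h1 := sinc_add_mul_deriv_sinc (n * π)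
  have h2 := two_mul_deriv_sinc_add_mul_deriv_deriv_sinc (n * π)
  rw [h0, cos_int_mul_pi] at h1
  rw [sin_int_mul_pi] at h2
  field_simp
  linear_combination h2 * (n * π) - 2 * h1

end Real

/-- Entries of the second sinc differentiation matrix: `S_k''(x_j) = −π²/(3h²)` for
`j = k` and `S_k''(x_j) = −2(−1)^{j−k}/(h²(j−k)²)` for `j ≠ k`; consequently the
matrix is symmetric. -/
theorem sinc_second_derivative_matrix (h : ℝ) (hh : 0 < h)
    (S : ℤ → ℝ → ℝ)
    (hS : S = fun (k : ℤ) (x : ℝ) => if x = (k : ℝ) * h then 1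
      else Real.sin (π / h * (x - (k : ℝ) * h)) / (π / h * (x - (k : ℝ) * h))) :
    (∀ j k : ℤ, deriv (deriv (S k)) ((j : ℝ) * h) =
      if j = k then -(π ^ 2) / (3 * h ^ 2)
      else -2 * (-1 : ℝ) ^ (j - k) / (h ^ 2 * ((j : ℝ) - (k : ℝ)) ^ 2)) ∧
    (∀ j k : ℤ, deriv (deriv (S k)) ((j : ℝ) * h) = deriv (deriv (S j)) ((k : ℝ) * h)) := by
  have hS_sinc : ∀ k : ℤ, S k = fun x => sinc (π / h * (x - k * h)) := by
    intro k
    funext x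
    simp only [hS, sinc_apply, mul_eq_zero, div_eq_zero_iff, pi_ne_zero, hh.ne', sub_eq_zero,
      or_self, false_or]
  have hnode : ∀ j k : ℤ,
      deriv (deriv (S k)) (j * h) = (π / h) ^ 2 * deriv (deriv sinc) ((j - k : ℤ) * π) := by
    intro j k
    rw [hS_sinc, deriv_deriv_comp_mul_sub]
    congr 2
    push_cast
    field_simp
  refine ⟨fun j k => ?_, fun j k => ?_⟩
  · rw [hnode]
    split_ifs with hjk
    · rw [hjk, sub_self, Int.cast_zero, zero_mul, deriv_deriv_sinc_zero]
      field_simp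
    · rw [deriv_deriv_sinc_int_mul_pi (sub_ne_zero.2 hjk)]
      push_cast
      field_simp
  · rw [hnode, hnode, ← neg_sub, Int.cast_neg, neg_mul, even_sinc.deriv.deriv]
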